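/- There is no ℤ-linear automorphism θ of the lattice L_BZ mapping the set of BZ triangles onto itself and satisfying pr(θ(T)) = σ(pr(T)) for all T ∈ L_BZ, where σ : ℤ⁶ → ℤ⁶ is the map (ℓ₁,ℓ₂,m₁,m₂,n₁,n₂) ↦ (m₁,m₂,ℓ₁,ℓ₂,n₁,n₂); that is, the label-swap symmetry ℓ ↔ m of the triple multiplicities does not lift to a linear symmetry of the set of BZ triangles. -/
import Mathlib


/-- The lattice `L_BZ` of integer labellings `(y₁,y₂,y₃,z₁,…,z₆)` (indexed `0,…,8`)
with `z₁−z₄ = z₅−z₂ = z₃−z₆`, as a ℤ-submodule of `ℤ⁹`. -/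
def Lbz : Submodule ℤ (Fin 9 → ℤ) where
  carrier := {T | T 3 - T 6 = T 7 - T 4 ∧ T 7 - T 4 = T 5 - T 8}
  add_mem' := by
    rintro a b ⟨ha1, ha2⟩ ⟨hb1, hb2⟩
    refine ⟨?_, ?_⟩ <;> simp only [Pi.add_apply] <;> omega
  zero_mem' := by refine ⟨?_, ?_⟩ <;> simp
  smul_mem' := by
    rintro m a ⟨h1, h2⟩
    refine ⟨?_, ?_⟩ <;> simp only [Pi.smul_apply, smul_eq_mul]
    · linear_combination m * h1
    · linear_combination m * h2

/-- The set of BZ triangles: the elements of `L_BZ` with nonnegative coordinates. -/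
def BZset : Set Lbz := {v | ∀ i, 0 ≤ (v : Fin 9 → ℤ) i}

/-- projection to `(ℓ₁,ℓ₂,m₁,m₂,n₁,n₂)`. -/
def pr (T : Fin 9 → ℤ) : Fin 6 → ℤ :=
  ![T 1 + T 6, T 2 + T 7, T 2 + T 8, T 0 + T 3, T 0 + T 4, T 1 + T 5]

/-- the label swap `ℓ ↔ m` on `(ℓ₁,ℓ₂,m₁,m₂,n₁,n₂)`. -/
def swapLM (s : Fin 6 → ℤ) : Fin 6 → ℤ := ![s 2, s 3, s 0, s 1, s 4, s 5]

lemma mem_Lbz (v : Fin 9 → ℤ) :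
    v ∈ Lbz ↔ (v 3 - v 6 = v 7 - v 4 ∧ v 7 - v 4 = v 5 - v 8) := Iff.rfl

def tt1 : Lbz := ⟨![0,0,0,0,0,1,0,0,1], by rw [mem_Lbz]; decide⟩
def tt2 : Lbz := ⟨![0,0,0,0,1,0,1,0,1], by rw [mem_Lbz]; decide⟩
def tt3 : Lbz := ⟨![0,0,0,1,0,1,0,1,0], by rw [mem_Lbz]; decide⟩

theorem stmt12 :
    ¬ ∃ θ : Lbz ≃ₗ[ℤ] Lbz, (⇑θ '' BZset = BZset) ∧
      ∀ T : Lbz, pr ((θ T : Fin 9 → ℤ)) = swapLM (pr (T : Fin 9 → ℤ)) := by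
  rintro ⟨θ, hBZ, hpr⟩
  have hmem : ∀ T : Lbz, T ∈ BZset → θ T ∈ BZset := by
    intro T hT
    rw [← hBZ]
    exact ⟨T, hT, rfl⟩
  -- θ tt1 has coordinate 1 equal to 1
  have ht1 : tt1 ∈ BZset := by
    intro i; fin_cases i <;> decide
  have h1 := hmem tt1 ht1
  have p1 : pr ((θ tt1 : Fin 9 → ℤ)) = ![1,0,0,0,0,1] := by
    rw [hpr tt1]; funext i; fin_cases i <;> rfl
  have e0 : (θ tt1 : Fin 9 → ℤ) 1 + (θ tt1 : Fin 9 → ℤ) 6 = 1 := congrFun p1 0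
  have e1 : (θ tt1 : Fin 9 → ℤ) 2 + (θ tt1 : Fin 9 → ℤ) 7 = 0 := congrFun p1 1
  have e2 : (θ tt1 : Fin 9 → ℤ) 2 + (θ tt1 : Fin 9 → ℤ) 8 = 0 := congrFun p1 2
  have e3 : (θ tt1 : Fin 9 → ℤ) 0 + (θ tt1 : Fin 9 → ℤ) 3 = 0 := congrFun p1 3
  have e4 : (θ tt1 : Fin 9 → ℤ) 0 + (θ tt1 : Fin 9 → ℤ) 4 = 0 := congrFun p1 4
  have e5 : (θ tt1 : Fin 9 → ℤ) 1 + (θ tt1 : Fin 9 → ℤ) 5 = 1 := congrFun p1 5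
  obtain ⟨q1, q2⟩ := (mem_Lbz _).mp (θ tt1).2
  have n0 := h1 0
  have n1 := h1 1
  have n2 := h1 2
  have n3 := h1 3
  have n4 := h1 4
  have n5 := h1 5
  have n6 := h1 6
  have n7 := h1 7
  have n8 := h1 8
  have key1 : (θ tt1 : Fin 9 → ℤ) 1 = 1 := by omega
  -- θ tt2 has coordinate 1 equal to 0
  have ht2 : tt2 ∈ BZset := by
    intro i; fin_cases i <;> decide
  have h2 := hmem tt2 ht2
  have p2 : pr ((θ tt2 : Fin 9 → ℤ)) = ![1,0,1,0,1,0] := by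
    rw [hpr tt2]; funext i; fin_cases i <;> rfl
  have f5 : (θ tt2 : Fin 9 → ℤ) 1 + (θ tt2 : Fin 9 → ℤ) 5 = 0 := congrFun p2 5
  have m1 := h2 1
  have m5 := h2 5
  have key2 : (θ tt2 : Fin 9 → ℤ) 1 = 0 := by omega
  -- θ tt3 has coordinate 1 equal to 0
  have ht3 : tt3 ∈ BZset := by
    intro i; fin_cases i <;> decide
  have h3 := hmem tt3 ht3
  have p3 : pr ((θ tt3 : Fin 9 → ℤ)) = ![0,1,0,1,0,1] := by
    rw [hpr tt3]; funext i; fin_cases i <;> rfl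
  have g0 : (θ tt3 : Fin 9 → ℤ) 1 + (θ tt3 : Fin 9 → ℤ) 6 = 0 := congrFun p3 0
  have k1 := h3 1
  have k6 := h3 6
  have key3 : (θ tt3 : Fin 9 → ℤ) 1 = 0 := by omega
  -- the combination S = tt2 + tt3 - tt1 is a BZ triangle
  have hS : tt2 + tt3 - tt1 ∈ BZset := by
    intro i
    simp only [Submodule.coe_sub, Submodule.coe_add, Pi.sub_apply, Pi.add_apply]
    fin_cases i <;> decide
  have hSimg := hmem _ hS 1
  rw [map_sub, map_add] at hSimg
  simp only [Submodule.coe_sub, Submodule.coe_add, Pi.sub_apply, Pi.add_apply] at hSimg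
  omega
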